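/- Let u be C^1 on a neighborhood of the closed sector B = {(r cosθ, r sinθ) : 0 ≤ r ≤ l, 0 ≤ θ ≤ θ0} with 0 < θ0 ≤ π and l > 0. Then |∫_0^l u(r cosθ0, r sinθ0) dr − ∫_0^l u(r, 0) dr| ≤ ∫_B |∇u| dx dy. -/

import Mathlib

/-! Along each arc `θ ↦ (r cos θ, r sin θ)` the fundamental theorem of calculus gives
`u(r, θ0) - u(r, 0) = ∫₀^θ0 ∂_θ (u ∘ polar)`, and `|∂_θ (u ∘ polar)| ≤ r |∇u|`. Integrating in `r`
bounds the left-hand side by `∫∫ r |∇u| dr dθ`, which is `∫_B |∇u|` because polar coordinates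
parametrize the sector injectively away from a null set as long as `θ0 ≤ π`. -/

open Set MeasureTheory Real

noncomputable section

/-- A point of the Euclidean plane given by its two coordinates. -/
def pt (x y : ℝ) : EuclideanSpace ℝ (Fin 2) := (WithLp.equiv 2 (Fin 2 → ℝ)).symm ![x, y]

lemma pt_eq_smul_add (x y : ℝ) : pt x y = x • pt 1 0 + y • pt 0 1 := by
  ext i; fin_cases i <;> simp [pt]

lemma norm_pt (x y : ℝ) : ‖pt x y‖ = √(x ^ 2 + y ^ 2) := by
  simp [EuclideanSpace.norm_eq, pt, Fin.sum_univ_two]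

lemma pt_comp_eq_smul_add {α : Type*} (f g : α → ℝ) :
    (fun a => pt (f a) (g a)) = fun a => f a • pt 1 0 + g a • pt 0 1 :=
  funext fun _ => pt_eq_smul_add _ _

lemma Continuous.ptMk {α : Type*} [TopologicalSpace α] {f g : α → ℝ} (hf : Continuous f)
    (hg : Continuous g) : Continuous fun a => pt (f a) (g a) := by
  rw [pt_comp_eq_smul_add]
  fun_prop

lemma HasDerivAt.ptMk {f g : ℝ → ℝ} {f' g' x : ℝ} (hf : HasDerivAt f f' x)
    (hg : HasDerivAt g g' x) :
    HasDerivAt (fun t => pt (f t) (g t)) (pt f' g') x := by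
  rw [pt_comp_eq_smul_add, pt_eq_smul_add f' g']
  exact (hf.smul_const (pt 1 0)).add (hg.smul_const (pt 0 1))

def polarPt (q : ℝ × ℝ) : EuclideanSpace ℝ (Fin 2) := pt (q.1 * cos q.2) (q.1 * sin q.2)

lemma polarPt_eq_repr_polarCoord_symm (q : ℝ × ℝ) :
    polarPt q = Complex.orthonormalBasisOneI.repr (Complex.polarCoord.symm q) := by
  ext i; fin_cases i <;> simp [polarPt, pt, -Complex.ofReal_cos, -Complex.ofReal_sin]

lemma continuous_polarPt : Continuous polarPt := by
  unfold polarPt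
  exact (by fun_prop : Continuous fun q : ℝ × ℝ => q.1 * cos q.2).ptMk (by fun_prop)

lemma norm_polarPt (q : ℝ × ℝ) : ‖polarPt q‖ = |q.1| := by
  rw [polarPt_eq_repr_polarCoord_symm, LinearIsometryEquiv.norm_map, Complex.norm_polarCoord_symm]

lemma Complex.polarCoord_polarCoord_symm {q : ℝ × ℝ} (hq : q ∈ Ioi 0 ×ˢ Ioc (-π) π) :
    Complex.polarCoord (Complex.polarCoord.symm q) = q := by
  obtain ⟨hr, hθ⟩ := hq
  rw [Complex.polarCoord_apply, Complex.norm_polarCoord_symm, abs_of_pos hr,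
    Complex.polarCoord_symm_apply, Complex.ofReal_cos, Complex.ofReal_sin,
    Complex.arg_mul_cos_add_sin_mul_I hr hθ]

lemma injOn_polarPt : InjOn polarPt (Ioi 0 ×ˢ Ioc (-π) π) := by
  intro q hq q' hq' h
  rw [polarPt_eq_repr_polarCoord_symm, polarPt_eq_repr_polarCoord_symm] at h
  rw [← Complex.polarCoord_polarCoord_symm hq, ← Complex.polarCoord_polarCoord_symm hq',
    Complex.orthonormalBasisOneI.repr.injective h]

lemma setIntegral_eq_setIntegral_polarPt {E : Type*} [NormedAddCommGroup E] [NormedSpace ℝ E]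
    (f : EuclideanSpace ℝ (Fin 2) → E) {s : Set (EuclideanSpace ℝ (Fin 2))}
    (hs : MeasurableSet s) :
    ∫ p in s, f p = ∫ q in polarCoord.target ∩ polarPt ⁻¹' s, q.1 • f (polarPt q) := by
  have hpre : MeasurableSet (polarPt ⁻¹' s) := continuous_polarPt.measurable hs
  let e := Complex.orthonormalBasisOneI.repr
  rw [← integral_indicator hs,
    ← e.measurePreserving.integral_comp e.toHomeomorph.measurableEmbedding,
    ← Complex.integral_comp_polarCoord_symm, ← setIntegral_indicator hpre]
  refine setIntegral_congr_fun polarCoord.open_target.measurableSet fun q _ => ?_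
  rw [← polarPt_eq_repr_polarCoord_symm]
  by_cases h : polarPt q ∈ s <;> simp [h]

lemma polarCoord_target_inter_preimage_polarPt_image {l θ0 : ℝ} (hθ0 : θ0 ≤ π) :
    polarCoord.target ∩ polarPt ⁻¹' (polarPt '' (Icc 0 l ×ˢ Icc 0 θ0))
      = Ioc 0 l ×ˢ (Icc 0 θ0 ∩ Ioo (-π) π) := by
  ext q
  constructor
  · rintro ⟨⟨hr, hθ⟩, q', ⟨hr', hθ'⟩, hq'⟩
    have hr'_pos : 0 < q'.1 := by
      have := congrArg norm hq'
      rw [norm_polarPt, norm_polarPt, abs_of_nonneg hr'.1, abs_of_pos hr] at this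
      exact this ▸ hr
    have hθ'_mem : q'.2 ∈ Ioc (-π) π := ⟨by linarith [pi_pos, hθ'.1], hθ'.2.trans hθ0⟩
    obtain rfl := injOn_polarPt ⟨hr'_pos, hθ'_mem⟩ ⟨hr, Ioo_subset_Ioc_self hθ⟩ hq'
    exact ⟨⟨hr, hr'.2⟩, hθ', hθ⟩
  · rintro ⟨⟨hr, hrl⟩, hθ, hθπ⟩
    exact ⟨⟨hr, hθπ⟩, q, ⟨⟨hr.le, hrl⟩, hθ⟩, rfl⟩

lemma Icc_inter_Ioo_neg_pi_pi_ae_eq_Ioc {θ0 : ℝ} (hθ0 : θ0 ≤ π) :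
    (Icc 0 θ0 ∩ Ioo (-π) π : Set ℝ) =ᵐ[volume] Ioc 0 θ0 := by
  rcases hθ0.lt_or_eq with hθ0 | rfl
  · rw [inter_eq_left.mpr (Icc_subset_Ioo (neg_lt_zero.mpr pi_pos) hθ0)]
    exact Ioc_ae_eq_Icc.symm
  · rw [show Icc 0 π ∩ Ioo (-π) π = Ico 0 π by
      ext θ
      simp only [mem_inter_iff, mem_Icc, mem_Ioo, mem_Ico]
      constructor
      · rintro ⟨⟨h0, -⟩, -, hπ⟩
        exact ⟨h0, hπ⟩
      · rintro ⟨h0, hπ⟩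
        exact ⟨⟨h0, hπ.le⟩, by linarith [pi_pos], hπ⟩]
    exact Ico_ae_eq_Ioc

lemma setIntegral_polarPt_image_Icc_prod_Icc {E : Type*} [NormedAddCommGroup E] [NormedSpace ℝ E]
    (f : EuclideanSpace ℝ (Fin 2) → E) {l θ0 : ℝ} (hθ0 : θ0 ≤ π) :
    ∫ p in polarPt '' (Icc 0 l ×ˢ Icc 0 θ0), f p
      = ∫ q in Ioc 0 l ×ˢ Ioc 0 θ0, q.1 • f (polarPt q) := by
  have hmeas : MeasurableSet (polarPt '' (Icc 0 l ×ˢ Icc 0 θ0)) :=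
    ((isCompact_Icc.prod isCompact_Icc).image continuous_polarPt).measurableSet
  rw [setIntegral_eq_setIntegral_polarPt f hmeas,
    polarCoord_target_inter_preimage_polarPt_image hθ0, Measure.volume_eq_prod]
  exact setIntegral_congr_set
    (Measure.set_prod_ae_eq ae_eq_rfl (Icc_inter_Ioo_neg_pi_pi_ae_eq_Ioc hθ0))

lemma integrableOn_Ioc_prod_Ioc_of_continuousOn {F : Type*} [NormedAddCommGroup F]
    {g : ℝ × ℝ → F} {a b c d : ℝ} (hg : ContinuousOn g (Icc a b ×ˢ Icc c d)) :
    IntegrableOn g (Ioc a b ×ˢ Ioc c d) :=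
  (hg.integrableOn_compact (isCompact_Icc.prod isCompact_Icc)).mono_set
    (prod_mono Ioc_subset_Icc_self Ioc_subset_Icc_self)

lemma hasDerivAt_polarPt_snd (r θ : ℝ) :
    HasDerivAt (fun t => polarPt (r, t)) (pt (-(r * sin θ)) (r * cos θ)) θ := by
  simpa only [polarPt, mul_neg] using
    ((hasDerivAt_cos θ).const_mul r).ptMk ((hasDerivAt_sin θ).const_mul r)

lemma norm_pt_neg_mul_sin_mul_cos (r θ : ℝ) : ‖pt (-(r * sin θ)) (r * cos θ)‖ = |r| := by
  rw [norm_pt, ← sqrt_sq_eq_abs]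
  congr 1
  linear_combination r ^ 2 * sin_sq_add_cos_sq θ

section AngularDeriv

variable {F : Type*} [NormedAddCommGroup F] [NormedSpace ℝ F]
  {u : EuclideanSpace ℝ (Fin 2) → F} {U : Set (EuclideanSpace ℝ (Fin 2))}

def angularDeriv (u : EuclideanSpace ℝ (Fin 2) → F) (q : ℝ × ℝ) : F :=
  fderiv ℝ u (polarPt q) (pt (-(q.1 * sin q.2)) (q.1 * cos q.2))

lemma DifferentiableAt.hasDerivAt_comp_polarPt_snd {r θ : ℝ}
    (hu : DifferentiableAt ℝ u (polarPt (r, θ))) :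
    HasDerivAt (fun t => u (polarPt (r, t))) (angularDeriv u (r, θ)) θ :=
  hu.hasFDerivAt.comp_hasDerivAt θ (hasDerivAt_polarPt_snd r θ)

lemma norm_angularDeriv_le (u : EuclideanSpace ℝ (Fin 2) → F) (q : ℝ × ℝ) :
    ‖angularDeriv u q‖ ≤ |q.1| * ‖fderiv ℝ u (polarPt q)‖ := by
  rw [angularDeriv, ← norm_pt_neg_mul_sin_mul_cos q.1 q.2]
  exact ((fderiv ℝ u (polarPt q)).le_opNorm _).trans_eq (mul_comm _ _)

lemma ContDiffOn.continuousOn_fderiv_comp_polarPt (hU : IsOpen U) (hu : ContDiffOn ℝ 1 u U) :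
    ContinuousOn (fun q => fderiv ℝ u (polarPt q)) (polarPt ⁻¹' U) :=
  (hu.continuousOn_fderiv_of_isOpen hU le_rfl).comp continuous_polarPt.continuousOn
    (mapsTo_preimage _ _)

lemma ContDiffOn.continuousOn_angularDeriv (hU : IsOpen U) (hu : ContDiffOn ℝ 1 u U) :
    ContinuousOn (angularDeriv u) (polarPt ⁻¹' U) := by
  refine (hu.continuousOn_fderiv_comp_polarPt hU).clm_apply (Continuous.continuousOn ?_)
  exact (by fun_prop : Continuous fun q : ℝ × ℝ => -(q.1 * Real.sin q.2)).ptMk (by fun_prop)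

lemma ContDiffOn.integral_comp_polarPt_sub_eq_setIntegral_angularDeriv [CompleteSpace F]
    (hU : IsOpen U) (hu : ContDiffOn ℝ 1 u U) {l θ0 : ℝ} (hl : 0 ≤ l) (hθ0 : 0 ≤ θ0)
    (hKU : Icc 0 l ×ˢ Icc 0 θ0 ⊆ polarPt ⁻¹' U) :
    (∫ r in 0..l, u (polarPt (r, θ0))) - ∫ r in 0..l, u (polarPt (r, 0))
      = ∫ q in Ioc 0 l ×ˢ Ioc 0 θ0, angularDeriv u q := by
  have hcont : ContinuousOn (angularDeriv u) (Icc 0 l ×ˢ Icc 0 θ0) :=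
    (hu.continuousOn_angularDeriv hU).mono hKU
  have hedge : ∀ θ ∈ Icc 0 θ0, IntervalIntegrable (fun r => u (polarPt (r, θ))) volume 0 l :=
    fun θ hθ => by
      refine ContinuousOn.intervalIntegrable ?_
      rw [uIcc_of_le hl]
      exact (hu.continuousOn.comp continuous_polarPt.continuousOn hKU).comp
        (Continuous.continuousOn (by fun_prop)) fun r hr => ⟨hr, hθ⟩
  have hftc : ∀ r ∈ uIcc 0 l,
      u (polarPt (r, θ0)) - u (polarPt (r, 0)) = ∫ θ in 0..θ0, angularDeriv u (r, θ) := by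
    intro r hr
    rw [uIcc_of_le hl] at hr
    refine (intervalIntegral.integral_eq_sub_of_hasDerivAt
      (f := fun θ => u (polarPt (r, θ))) (fun θ hθ => ?_) ?_).symm
    · rw [uIcc_of_le hθ0] at hθ
      exact ((hu.differentiableOn one_ne_zero).differentiableAt
        (hU.mem_nhds (hKU ⟨hr, hθ⟩))).hasDerivAt_comp_polarPt_snd
    · refine ContinuousOn.intervalIntegrable ?_
      rw [uIcc_of_le hθ0]
      exact hcont.comp (Continuous.continuousOn (by fun_prop)) fun θ hθ => ⟨hr, hθ⟩
  rw [← intervalIntegral.integral_sub (hedge θ0 ⟨hθ0, le_rfl⟩) (hedge 0 ⟨le_rfl, hθ0⟩),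
    intervalIntegral.integral_congr hftc, intervalIntegral.integral_of_le hl,
    Measure.volume_eq_prod,
    setIntegral_prod (angularDeriv u) (integrableOn_Ioc_prod_Ioc_of_continuousOn hcont)]
  simp only [intervalIntegral.integral_of_le hθ0]

end AngularDeriv

/-- Rotation estimate: for `u` of class `C¹` on a neighborhood of the closed sector
`B = {(r cos θ, r sin θ) : 0 ≤ r ≤ l, 0 ≤ θ ≤ θ0}` with `0 < θ0 ≤ π` and `l > 0`,
`|∫_0^l u(r cos θ0, r sin θ0) dr − ∫_0^l u(r,0) dr| ≤ ∫_B |∇u|`. -/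
theorem rotation_estimate (l θ0 : ℝ) (hl : 0 < l) (hθ0 : 0 < θ0) (hθ0' : θ0 ≤ π)
    (B : Set (EuclideanSpace ℝ (Fin 2)))
    (hB : B = {p | ∃ r ∈ Icc (0:ℝ) l, ∃ θ ∈ Icc (0:ℝ) θ0, p = pt (r * Real.cos θ) (r * Real.sin θ)})
    (U : Set (EuclideanSpace ℝ (Fin 2))) (hU : IsOpen U) (hBU : B ⊆ U)
    (u : EuclideanSpace ℝ (Fin 2) → ℝ) (hu : ContDiffOn ℝ 1 u U) :
    |(∫ r in (0:ℝ)..l, u (pt (r * Real.cos θ0) (r * Real.sin θ0)))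
        - ∫ r in (0:ℝ)..l, u (pt r 0)|
      ≤ ∫ p in B, ‖fderiv ℝ u p‖ := by
  have hB_image : B = polarPt '' (Icc 0 l ×ˢ Icc 0 θ0) := by
    subst hB
    ext p
    constructor
    · rintro ⟨r, hr, θ, hθ, rfl⟩
      exact ⟨(r, θ), ⟨hr, hθ⟩, rfl⟩
    · rintro ⟨⟨r, θ⟩, ⟨hr, hθ⟩, rfl⟩
      exact ⟨r, hr, θ, hθ, rfl⟩
  have hKU : Icc 0 l ×ˢ Icc 0 θ0 ⊆ polarPt ⁻¹' U :=
    fun q hq => hBU (hB_image ▸ mem_image_of_mem polarPt hq)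
  have hpt_zero : (fun r : ℝ => u (pt r 0)) = fun r => u (polarPt (r, 0)) := by
    simp [polarPt]
  rw [hpt_zero, ← Real.norm_eq_abs]
  change ‖(∫ r in (0:ℝ)..l, u (polarPt (r, θ0))) - _‖ ≤ _
  rw [hu.integral_comp_polarPt_sub_eq_setIntegral_angularDeriv hU hl.le hθ0.le hKU, hB_image,
    setIntegral_polarPt_image_Icc_prod_Icc _ hθ0']
  refine (norm_integral_le_integral_norm _).trans (setIntegral_mono_on ?_ ?_ ?_ fun q hq => ?_)
  · exact (integrableOn_Ioc_prod_Ioc_of_continuousOn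
      ((hu.continuousOn_angularDeriv hU).mono hKU)).norm
  · exact integrableOn_Ioc_prod_Ioc_of_continuousOn
      (continuous_fst.continuousOn.smul ((hu.continuousOn_fderiv_comp_polarPt hU).mono hKU).norm)
  · exact measurableSet_Ioc.prod measurableSet_Ioc
  · simpa only [abs_of_pos hq.1.1, smul_eq_mul] using norm_angularDeriv_le u q
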